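/- Let μ be the semicircle distribution on ℝ and let α ∈ (0,1). Then A_α = (−2√α, 2√α); moreover, for every c ∈ (−2√α, 2√α), setting w_{α,c} := ((1−α)c + i(1−α)√(4α − c²))/(2α), one has {w ∈ ℂ ∖ ℝ : w·G_μ(w + c) = 1 − α} = {w_{α,c}, conj(w_{α,c})}, Im(w_{α,c}) > 0, and −((1−α)/π)·Im(1/w_{α,c}) = (1/(2π))·√(4α − c²) = √α·ρ_sc(c/√α). -/

import Mathlib

/-!
The Cauchy transform `G` of the semicircle law satisfies `G z ^ 2 - z * G z + 1 = 0` off the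
real axis. Both sides are holomorphic on the upper half-plane, so it suffices to check this on the
imaginary axis, where `G (y * I) = (y - √(y ^ 2 + 4)) / 2 * I` follows from an explicit arcsin
antiderivative of `√(4 - t ^ 2) / (t ^ 2 + y ^ 2)`.

Multiplying this equation at `z + c` by `z ^ 2` turns `z * G (z + c) = 1 - α` into the real
quadratic `α z ^ 2 - (1 - α) c z + (1 - α) ^ 2 = 0`, whose roots are non-real exactly when
`c ^ 2 < 4 α`; they are then `w_{α,c}` and its conjugate. Conversely, if `z` is a root in the upper
half-plane, `z * G (z + c)` is a root of `X ^ 2 - z (z + c) X + z ^ 2`, namely `1 - α` or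
`z (z + c) - (1 - α)`; the latter would give `G (z + c)` positive imaginary part, whereas `Im G ≤ 0`
on the upper half-plane.
-/

open MeasureTheory Complex

/-- The Cauchy (Stieltjes) transform of a measure on `ℝ`. -/
noncomputable def cauchyT (μ : Measure ℝ) (w : ℂ) : ℂ := ∫ t : ℝ, (w - (t : ℂ))⁻¹ ∂μ

/-- Density of the standard semicircle distribution. -/
noncomputable def rhoSC (x : ℝ) : ℝ :=
  if |x| ≤ 2 then Real.sqrt (4 - x ^ 2) / (2 * Real.pi) else 0

/-- The standard semicircle distribution on `ℝ`. -/
noncomputable def semicircle : Measure ℝ :=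
  volume.withDensity (fun x => ENNReal.ofReal (rhoSC x))

open Filter Topology Real ComplexConjugate

section CauchyTransform

variable (μ : Measure ℝ)

lemma abs_im_le_norm_sub_ofReal (z : ℂ) (t : ℝ) : |z.im| ≤ ‖z - t‖ := by
  simpa using abs_im_le_norm (z - t)

lemma norm_inv_sub_ofReal_le {z : ℂ} (hz : z.im ≠ 0) (t : ℝ) : ‖(z - t)⁻¹‖ ≤ |z.im|⁻¹ := by
  rw [norm_inv]
  exact inv_anti₀ (abs_pos.mpr hz) (abs_im_le_norm_sub_ofReal z t)

variable [IsFiniteMeasure μ]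

lemma integrable_inv_sub_ofReal {z : ℂ} (hz : z.im ≠ 0) :
    Integrable (fun t : ℝ => (z - t)⁻¹) μ :=
  (integrable_const |z.im|⁻¹).mono' (by fun_prop) (.of_forall (norm_inv_sub_ofReal_le hz))

omit [IsFiniteMeasure μ] in
lemma cauchyT_conj (z : ℂ) : cauchyT μ (conj z) = conj (cauchyT μ z) := by
  simp only [cauchyT, ← integral_conj, map_inv₀, map_sub, conj_ofReal]

lemma im_cauchyT_nonpos {z : ℂ} (hz : 0 < z.im) : (cauchyT μ z).im ≤ 0 := by
  rw [cauchyT, ← imCLM_apply, ← imCLM.integral_comp_comm (integrable_inv_sub_ofReal μ hz.ne')]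
  refine integral_nonpos fun t => ?_
  rw [imCLM_apply, inv_im]
  exact div_nonpos_of_nonpos_of_nonneg (by simpa using hz.le) (normSq_nonneg _)

lemma differentiableAt_cauchyT {z : ℂ} (hz : z.im ≠ 0) :
    DifferentiableAt ℂ (cauchyT μ) z := by
  set δ := |z.im| / 2 with hδ_def
  have hδ : 0 < δ := by positivity
  have hball : ∀ x ∈ Metric.ball z δ, ∀ t : ℝ, δ ≤ ‖x - t‖ := by
    intro x hx t
    have h1 : |(z - x).im| ≤ ‖z - x‖ := abs_im_le_norm _
    rw [← dist_eq_norm, dist_comm] at h1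
    have h2 := abs_sub_abs_le_abs_sub z.im x.im
    have h3 := abs_im_le_norm_sub_ofReal x t
    simp only [sub_im] at h1
    linarith [Metric.mem_ball.mp hx]
  have hne : ∀ x ∈ Metric.ball z δ, ∀ t : ℝ, x - t ≠ 0 := fun x hx t h =>
    hδ.not_ge (by simpa [h] using hball x hx t)
  have hF'_meas : AEStronglyMeasurable (fun t : ℝ => -1 / (z - t) ^ 2) μ :=
    (by fun_prop : Measurable fun t : ℝ => -1 / (z - t) ^ 2).aestronglyMeasurable
  refine (hasDerivAt_integral_of_dominated_loc_of_deriv_le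
    (F' := fun w (t : ℝ) => -1 / (w - t) ^ 2) (bound := fun _ => (δ ^ 2)⁻¹)
    (Metric.ball_mem_nhds z hδ) (.of_forall fun _ => by fun_prop)
    (integrable_inv_sub_ofReal μ hz) hF'_meas (.of_forall fun t x hx => ?_)
    (integrable_const _) (.of_forall fun t x hx => ?_)).2.differentiableAt
  · rw [norm_div, norm_neg, norm_one, norm_pow, one_div]
    gcongr
    exact hball x hx t
  · exact ((hasDerivAt_id x).sub_const (t : ℂ)).inv (hne x hx t)

end CauchyTransform

lemma integral_of_odd_eq_zero {E : Type*} [NormedAddCommGroup E] [NormedSpace ℝ E]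
    {f : ℝ → E} (hf : ∀ t, f (-t) = -f t) (a : ℝ) : ∫ t in -a..a, f t = 0 := by
  have h := intervalIntegral.integral_comp_neg (a := -a) (b := a) f
  simp only [hf, intervalIntegral.integral_neg, neg_neg] at h
  have h2 : (2 : ℝ) • ∫ t in -a..a, f t = 0 := by
    rw [two_smul]
    nth_rewrite 1 [← h]
    exact neg_add_cancel _
  exact (smul_eq_zero.mp h2).resolve_left two_ne_zero

lemma rhoSC_eq_zero {x : ℝ} (hx : 2 ≤ |x|) : rhoSC x = 0 := by
  unfold rhoSC
  split_ifs
  · rw [Real.sqrt_eq_zero'.mpr (by nlinarith [sq_abs x]), zero_div]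
  · rfl

-- `Real.sqrt` vanishes on negative arguments, so the indicator in `rhoSC` is redundant.
lemma rhoSC_eq_sqrt_div (x : ℝ) : rhoSC x = √(4 - x ^ 2) / (2 * π) := by
  rcases le_or_gt 2 |x| with hx | hx
  · rw [rhoSC_eq_zero hx, Real.sqrt_eq_zero'.mpr (by nlinarith [sq_abs x]), zero_div]
  · exact if_pos hx.le

lemma rhoSC_neg (x : ℝ) : rhoSC (-x) = rhoSC x := by
  simp only [rhoSC_eq_sqrt_div, neg_sq]

lemma rhoSC_nonneg (x : ℝ) : 0 ≤ rhoSC x := by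
  rw [rhoSC_eq_sqrt_div]
  positivity

lemma continuous_rhoSC : Continuous rhoSC := by
  simp only [funext rhoSC_eq_sqrt_div]
  fun_prop

lemma hasCompactSupport_rhoSC : HasCompactSupport rhoSC :=
  HasCompactSupport.intro isCompact_Icc fun x hx =>
    rhoSC_eq_zero (by rw [Set.mem_Icc, ← abs_le] at hx; exact (not_le.mp hx).le)

instance : IsFiniteMeasure semicircle :=
  isFiniteMeasure_withDensity_ofReal
    (continuous_rhoSC.integrable_of_hasCompactSupport hasCompactSupport_rhoSC).hasFiniteIntegral

lemma integral_semicircle {E : Type*} [NormedAddCommGroup E] [NormedSpace ℝ E] (g : ℝ → E) :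
    ∫ t, g t ∂semicircle = ∫ t in -2..2, rhoSC t • g t := by
  rw [semicircle, integral_withDensity_eq_integral_toReal_smul
    continuous_rhoSC.measurable.ennreal_ofReal (.of_forall fun _ => ENNReal.ofReal_lt_top)]
  simp only [ENNReal.toReal_ofReal (rhoSC_nonneg _)]
  rw [intervalIntegral.integral_of_le (by norm_num),
    setIntegral_eq_integral_of_forall_compl_eq_zero]
  intro x hx
  rw [Set.mem_Ioc, not_and_or, not_lt, not_le] at hx
  rw [rhoSC_eq_zero (le_abs'.mpr (hx.imp_right le_of_lt)), zero_smul]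

lemma HasDerivAt.arcsin {f : ℝ → ℝ} {f' x : ℝ} (hf : HasDerivAt f f' x) (h : f x ^ 2 < 1) :
    HasDerivAt (fun t => arcsin (f t)) (f' / √(1 - f x ^ 2)) x := by
  obtain ⟨h₁, h₂⟩ := abs_lt.mp ((sq_lt_one_iff_abs_lt_one _).mp h)
  exact ((hasDerivAt_arcsin h₁.ne' h₂.ne).comp x hf).congr_deriv (by ring)

section ImaginaryAxis

variable {y : ℝ}

-- From `√(4 - t²) / (t² + y²) = (y² + 4) / ((t² + y²) √(4 - t²)) - 1 / √(4 - t²)`: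
-- both terms have arcsin primitives.
lemma hasDerivAt_antideriv_sqrt_four_sub_sq_div (hy : 0 < y) {t : ℝ} (ht : t ∈ Set.Ioo (-2 : ℝ) 2) :
    HasDerivAt (fun t => √(y ^ 2 + 4) / y * arcsin (√(y ^ 2 + 4) * t / (2 * √(t ^ 2 + y ^ 2)))
        - arcsin (t / 2)) (√(4 - t ^ 2) / (t ^ 2 + y ^ 2)) t := by
  obtain ⟨ht₁, ht₂⟩ := ht
  set s := √(y ^ 2 + 4)
  set q := √(t ^ 2 + y ^ 2)
  set r := √(4 - t ^ 2)
  have hs : s ^ 2 = y ^ 2 + 4 := Real.sq_sqrt (by positivity)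
  have hq : q ^ 2 = t ^ 2 + y ^ 2 := Real.sq_sqrt (by positivity)
  have hr : r ^ 2 = 4 - t ^ 2 := Real.sq_sqrt (by nlinarith)
  have hq0 : 0 < q := Real.sqrt_pos.mpr (by positivity)
  have hr0 : 0 < r := Real.sqrt_pos.mpr (by nlinarith)
  have hu : HasDerivAt (fun t => s * t / (2 * √(t ^ 2 + y ^ 2))) (s * y ^ 2 / (2 * q ^ 3)) t := by
    refine (((hasDerivAt_id t).const_mul s).div
      ((((hasDerivAt_pow 2 t).add_const (y ^ 2)).sqrt (by positivity)).const_mul 2)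
      (by positivity)).congr_deriv ?_
    field_simp
    rw [show √(t ^ 2 + y ^ 2) = q from rfl]
    simp only [id, Nat.cast_ofNat, pow_one, Nat.add_one_sub_one]
    linear_combination (2 * s * q ^ 3) * hq
  have hu_sq : 1 - (s * t / (2 * q)) ^ 2 = (y * r / (2 * q)) ^ 2 := by
    field_simp
    linear_combination 4 * hq - t ^ 2 * hs - y ^ 2 * hr
  have hv_sq : 1 - (t / 2) ^ 2 = (r / 2) ^ 2 := by
    field_simp
    linear_combination -hr
  have hu1 : (s * t / (2 * q)) ^ 2 < 1 := by
    have : 0 < (y * r / (2 * q)) ^ 2 := by positivity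
    linarith
  have hv1 : (t / 2) ^ 2 < 1 := by nlinarith
  refine ((hu.arcsin hu1).const_mul (s / y) |>.sub
    (((hasDerivAt_id' t).div_const 2).arcsin hv1)).congr_deriv ?_
  rw [hu_sq, hv_sq, Real.sqrt_sq (by positivity), Real.sqrt_sq (by positivity)]
  field_simp
  linear_combination (t ^ 2 + y ^ 2) * hs - q ^ 2 * hr - (y ^ 2 + 4) * hq

lemma integral_sqrt_four_sub_sq_div (hy : 0 < y) :
    ∫ t in -2..2, √(4 - t ^ 2) / (t ^ 2 + y ^ 2) = π * (√(y ^ 2 + 4) - y) / y := by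
  have hq : ∀ t : ℝ, 0 < t ^ 2 + y ^ 2 := fun t => by positivity
  have hs : 0 < √(y ^ 2 + 4) := by positivity
  rw [intervalIntegral.integral_eq_sub_of_hasDerivAt_of_le (by norm_num)
    (Continuous.continuousOn (by fun_prop (disch := intros; positivity)))
    (fun t ht => hasDerivAt_antideriv_sqrt_four_sub_sq_div hy ht)
    (Continuous.intervalIntegrable (by fun_prop (disch := intros; positivity)) _ _)]
  have h₁ : √(y ^ 2 + 4) * 2 / (2 * √(2 ^ 2 + y ^ 2)) = 1 := by
    rw [add_comm (2 ^ 2)]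
    field_simp
    norm_num
  have h₂ : √(y ^ 2 + 4) * -2 / (2 * √((-2) ^ 2 + y ^ 2)) = -1 := by
    rw [neg_sq, add_comm (2 ^ 2)]
    field_simp
    norm_num
  rw [h₁, h₂]
  norm_num [arcsin_one, arcsin_neg_one]
  field_simp
  ring

lemma cauchyT_semicircle_ofReal_mul_I (hy : 0 < y) :
    cauchyT semicircle (y * I) = (y - √(y ^ 2 + 4)) / 2 * I := by
  have hint := integrable_inv_sub_ofReal semicircle (z := y * I) (by simpa using hy.ne')
  apply Complex.ext
  · have hre (t : ℝ) : ((y * I - t)⁻¹).re = -t / (t ^ 2 + y ^ 2) := by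
      simp only [inv_re, normSq_apply, sub_re, sub_im, mul_re, mul_im, ofReal_re, ofReal_im, I_re,
        I_im, mul_zero, mul_one, sub_self, zero_sub, add_zero, sub_zero, mul_neg, neg_mul, neg_neg]
      ring
    rw [cauchyT, ← reCLM_apply, ← reCLM.integral_comp_comm hint]
    simp only [reCLM_apply, hre, integral_semicircle]
    rw [integral_of_odd_eq_zero (fun t => by simp only [rhoSC_neg, smul_eq_mul]; ring) 2]
    simp
  · have him (t : ℝ) : ((y * I - t)⁻¹).im = -y / (t ^ 2 + y ^ 2) := by
      simp only [inv_im, normSq_apply, sub_re, sub_im, mul_re, mul_im, ofReal_re, ofReal_im, I_re,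
        I_im, mul_zero, mul_one, sub_self, zero_sub, add_zero, sub_zero, mul_neg, neg_mul, neg_neg]
      ring
    rw [cauchyT, ← imCLM_apply, ← imCLM.integral_comp_comm hint]
    have hρ (t : ℝ) : rhoSC t • (-y / (t ^ 2 + y ^ 2))
        = -y / (2 * π) * (√(4 - t ^ 2) / (t ^ 2 + y ^ 2)) := by
      rw [rhoSC_eq_sqrt_div, smul_eq_mul]
      ring
    simp only [imCLM_apply, him, integral_semicircle, hρ, intervalIntegral.integral_const_mul,
      integral_sqrt_four_sub_sq_div hy]
    simp only [mul_im, div_ofNat_re, div_ofNat_im, sub_re, sub_im, ofReal_re, ofReal_im, I_re, I_im,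
      mul_zero, mul_one, sub_self, zero_div, add_zero]
    field_simp
    ring

end ImaginaryAxis

lemma cauchyT_semicircle_quadratic_of_im_pos {z : ℂ} (hz : 0 < z.im) :
    cauchyT semicircle z ^ 2 - z * cauchyT semicircle z + 1 = 0 := by
  set f := fun w => cauchyT semicircle w ^ 2 - w * cauchyT semicircle w + 1
  have hf : AnalyticOnNhd ℂ f {w | 0 < w.im} :=
    DifferentiableOn.analyticOnNhd (fun w hw =>
      have hG := differentiableAt_cauchyT semicircle (ne_of_gt hw)
      ((hG.pow 2).sub (differentiableAt_id.mul hG) |>.add_const 1).differentiableWithinAt)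
      (isOpen_lt continuous_const continuous_im)
  have hf_axis (y : ℝ) (hy : 0 < y) : f (y * I) = 0 := by
    have hs : ((√(y ^ 2 + 4) : ℝ) : ℂ) ^ 2 = y ^ 2 + 4 := by
      rw [← ofReal_pow, Real.sq_sqrt (by positivity)]
      push_cast
      ring
    simp only [f, cauchyT_semicircle_ofReal_mul_I hy]
    linear_combination ((y - √(y ^ 2 + 4)) ^ 2 / 4 - y * (y - √(y ^ 2 + 4)) / 2 : ℂ) * I_sq
      - (1 / 4 : ℂ) * hs
  have h_axis : Tendsto (fun y : ℝ => (y : ℂ) * I) (𝓝[≠] 1) (𝓝[≠] I) := by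
    refine tendsto_nhdsWithin_of_tendsto_nhds_of_eventually_within _ ?_ ?_
    · exact ((by fun_prop : Continuous fun y : ℝ => (y : ℂ) * I).tendsto' 1 I (by simp)).mono_left
        nhdsWithin_le_nhds
    · filter_upwards [self_mem_nhdsWithin] with y hy
      simpa [I_ne_zero] using hy
  refine hf.eqOn_zero_of_preconnected_of_frequently_eq_zero
    (convex_halfSpace_im_gt 0).isPreconnected (by simp) (h_axis.frequently ?_) hz
  exact ((eventually_nhdsWithin_of_eventually_nhds (eventually_gt_nhds one_pos)).mono
    hf_axis).frequently

lemma cauchyT_semicircle_quadratic {z : ℂ} (hz : z.im ≠ 0) :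
    cauchyT semicircle z ^ 2 - z * cauchyT semicircle z + 1 = 0 := by
  rcases hz.lt_or_gt with hz | hz
  · simpa [cauchyT_conj] using
      congrArg conj (cauchyT_semicircle_quadratic_of_im_pos (z := conj z) (by simpa using hz))
  · exact cauchyT_semicircle_quadratic_of_im_pos hz

section Subordination

open Set

variable {α c : ℝ}

lemma mem_Ioo_iff_sq_lt : c ∈ Ioo (-(2 * √α)) (2 * √α) ↔ c ^ 2 < 4 * α := by
  have h : 2 * √α = √(4 * α) := by
    rw [Real.sqrt_mul (by norm_num), show (4 : ℝ) = 2 ^ 2 by norm_num, Real.sqrt_sq two_pos.le]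
  rw [mem_Ioo, ← abs_lt, h, Real.lt_sqrt (abs_nonneg c), sq_abs]

lemma sqrt_mul_rhoSC_div_sqrt (hα : 0 < α) (c : ℝ) :
    √α * rhoSC (c / √α) = √(4 * α - c ^ 2) / (2 * π) := by
  rw [rhoSC_eq_sqrt_div, mul_div_assoc', ← Real.sqrt_mul hα.le, mul_sub, div_pow,
    Real.sq_sqrt hα.le, mul_div_cancel₀ _ hα.ne']
  ring_nf

lemma quadratic_of_mul_cauchyT_semicircle_eq {z : ℂ} (hz : z.im ≠ 0)
    (h : z * cauchyT semicircle (z + c) = ((1 - α : ℝ) : ℂ)) :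
    (α * z ^ 2 - (1 - α) * c * z + (1 - α) ^ 2 : ℂ) = 0 := by
  have hG := cauchyT_semicircle_quadratic (z := z + c) (by simpa using hz)
  push_cast at h
  linear_combination z ^ 2 * hG + (z * (z + c) - z * cauchyT semicircle (z + c) - (1 - α)) * h

lemma mul_cauchyT_semicircle_eq_of_quadratic (hα : α < 1) {z : ℂ} (hz : 0 < z.im)
    (hP : (α * z ^ 2 - (1 - α) * c * z + (1 - α) ^ 2 : ℂ) = 0) :
    z * cauchyT semicircle (z + c) = ((1 - α : ℝ) : ℂ) := by
  set G := cauchyT semicircle (z + c)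
  have hG := cauchyT_semicircle_quadratic (z := z + c) (by simpa using hz.ne')
  have hfac : (z * G - (1 - α)) * (z * G + (1 - α) - z * (z + c)) = 0 := by
    linear_combination z ^ 2 * hG - hP
  push_cast
  refine sub_eq_zero.mp ((mul_eq_zero.mp hfac).resolve_right fun h => ?_)
  have hz0 : z ≠ 0 := by rintro rfl; simp at hz
  have hG' : G = z + c - ((1 - α : ℝ) : ℂ) * z⁻¹ := by
    push_cast
    field_simp
    linear_combination h
  have hGim : 0 < G.im := by
    have : (1 - α) * (-z.im / normSq z) ≤ 0 := mul_nonpos_of_nonneg_of_nonpos (by linarith)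
      (div_nonpos_of_nonpos_of_nonneg (by linarith) (normSq_nonneg z))
    rw [hG', sub_im, add_im, ofReal_im, add_zero, im_ofReal_mul, inv_im]
    linarith
  exact (im_cauchyT_nonpos semicircle (by simpa using hz)).not_gt hGim

lemma sq_lt_of_quadratic (hα : α ≠ 0) {z : ℂ} (hz : z.im ≠ 0)
    (hP : (α * z ^ 2 - (1 - α) * c * z + (1 - α) ^ 2 : ℂ) = 0) : c ^ 2 < 4 * α := by
  have hre := congrArg re hP
  have him := congrArg im hP
  simp only [pow_two, add_re, sub_re, mul_re, ofReal_re, ofReal_im, mul_im, zero_mul, sub_zero,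
    one_re, sub_im, one_im, sub_self, mul_zero, add_zero, zero_re, add_im, zero_im] at hre him
  have hx : 2 * α * z.re = (1 - α) * c :=
    mul_left_cancel₀ hz (by linear_combination him)
  have key : 4 * α ^ 2 * z.im ^ 2 = (1 - α) ^ 2 * (4 * α - c ^ 2) := by
    linear_combination (-4 * α) * hre + (2 * α * z.re - (1 - α) * c) * hx
  have : 0 < (1 - α) ^ 2 * (4 * α - c ^ 2) := by
    rw [← key]
    positivity
  linarith [pos_of_mul_pos_right this (sq_nonneg _)]

/-- The point `w_{α,c}`: for `c ^ 2 < 4 * α` it is the root of `α z ^ 2 - (1 - α) c z + (1 - α) ^ 2`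
in the upper half-plane. -/
noncomputable def upperRoot (α c : ℝ) : ℂ :=
  ((((1 - α) * c : ℝ) : ℂ) + (((1 - α) * √(4 * α - c ^ 2) : ℝ) : ℂ) * I) / (((2 * α : ℝ)) : ℂ)

lemma upperRoot_re : (upperRoot α c).re = (1 - α) * c / (2 * α) := by
  rw [upperRoot, div_ofReal_re]
  simp

lemma upperRoot_im : (upperRoot α c).im = (1 - α) * √(4 * α - c ^ 2) / (2 * α) := by
  rw [upperRoot, div_ofReal_im]
  simp

lemma upperRoot_im_pos (hα : α ∈ Ioo 0 1) (hc : c ^ 2 < 4 * α) : 0 < (upperRoot α c).im := by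
  have h1α : 0 < 1 - α := sub_pos.mpr hα.2
  have hD : 0 < √(4 * α - c ^ 2) := Real.sqrt_pos.mpr (sub_pos.mpr hc)
  rw [upperRoot_im]
  have := hα.1
  positivity

lemma normSq_upperRoot (hα : α ≠ 0) (hc : c ^ 2 ≤ 4 * α) :
    normSq (upperRoot α c) = (1 - α) ^ 2 / α := by
  have hD := Real.sq_sqrt (sub_nonneg.mpr hc)
  rw [normSq_apply, upperRoot_re, upperRoot_im]
  set D := √(4 * α - c ^ 2)
  field_simp
  linear_combination (1 - α) ^ 2 * hD

lemma quadratic_eq_mul_upperRoot (hα : α ≠ 0) (hc : c ^ 2 ≤ 4 * α) (z : ℂ) :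
    (α * z ^ 2 - (1 - α) * c * z + (1 - α) ^ 2 : ℂ)
      = α * ((z - upperRoot α c) * (z - conj (upperRoot α c))) := by
  set w := upperRoot α c
  rw [show (α : ℂ) * ((z - w) * (z - conj w)) = α * z ^ 2 - α * (w + conj w) * z + α * (w * conj w)
    by ring, add_conj, mul_conj, upperRoot_re, normSq_upperRoot hα hc]
  have : (α : ℂ) ≠ 0 := ofReal_ne_zero.mpr hα
  push_cast
  field_simp

lemma upperRoot_mul_cauchyT_semicircle (hα : α ∈ Ioo 0 1) (hc : c ^ 2 < 4 * α) :
    upperRoot α c * cauchyT semicircle (upperRoot α c + c) = ((1 - α : ℝ) : ℂ) :=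
  mul_cauchyT_semicircle_eq_of_quadratic hα.2 (upperRoot_im_pos hα hc)
    (by simp [quadratic_eq_mul_upperRoot hα.1.ne' hc.le])

lemma setOf_mul_cauchyT_semicircle_eq (hα : α ∈ Ioo 0 1) (hc : c ^ 2 < 4 * α) :
    {z : ℂ | z.im ≠ 0 ∧ z * cauchyT semicircle (z + c) = ((1 - α : ℝ) : ℂ)}
      = {upperRoot α c, conj (upperRoot α c)} := by
  have hw := upperRoot_mul_cauchyT_semicircle hα hc
  have hw_im := upperRoot_im_pos hα hc
  ext z
  simp only [mem_ofPred_eq, mem_insert_iff, mem_singleton_iff]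
  constructor
  · rintro ⟨hz, h⟩
    have hP := quadratic_of_mul_cauchyT_semicircle_eq hz h
    rw [quadratic_eq_mul_upperRoot hα.1.ne' hc.le] at hP
    simpa [sub_eq_zero, hα.1.ne'] using hP
  · rintro (rfl | rfl)
    · exact ⟨hw_im.ne', hw⟩
    · refine ⟨by simpa using hw_im.ne', ?_⟩
      simpa [← cauchyT_conj] using congrArg conj hw

lemma im_inv_upperRoot (hα : α ∈ Ioo 0 1) (hc : c ^ 2 ≤ 4 * α) :
    (upperRoot α c)⁻¹.im = -√(4 * α - c ^ 2) / (2 * (1 - α)) := by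
  have h1α : 1 - α ≠ 0 := (sub_pos.mpr hα.2).ne'
  have := hα.1.ne'
  rw [inv_im, normSq_upperRoot hα.1.ne' hc, upperRoot_im]
  field_simp

end Subordination

theorem stmt7 (α : ℝ) (hα : α ∈ Set.Ioo (0 : ℝ) 1) :
    {c : ℝ | ∃ w : ℂ, w.im ≠ 0 ∧ w * cauchyT semicircle (w + c) = ((1 - α : ℝ) : ℂ)}
      = Set.Ioo (-(2 * Real.sqrt α)) (2 * Real.sqrt α) ∧
    ∀ c ∈ Set.Ioo (-(2 * Real.sqrt α)) (2 * Real.sqrt α),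
      let w : ℂ := ((((1 - α) * c : ℝ) : ℂ) +
          (((1 - α) * Real.sqrt (4 * α - c ^ 2) : ℝ) : ℂ) * Complex.I) / (((2 * α : ℝ)) : ℂ)
      0 < w.im ∧
      {z : ℂ | z.im ≠ 0 ∧ z * cauchyT semicircle (z + c) = ((1 - α : ℝ) : ℂ)}
        = {w, (starRingEnd ℂ) w} ∧
      -((1 - α) / Real.pi) * (w⁻¹).im = (1 / (2 * Real.pi)) * Real.sqrt (4 * α - c ^ 2) ∧
      (1 / (2 * Real.pi)) * Real.sqrt (4 * α - c ^ 2)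
        = Real.sqrt α * rhoSC (c / Real.sqrt α) := by
  refine ⟨Set.ext fun c => ?_, fun c hc => ?_⟩
  · rw [Set.mem_ofPred_eq, mem_Ioo_iff_sq_lt]
    refine ⟨fun ⟨z, hz, h⟩ => ?_, fun hc => ?_⟩
    · exact sq_lt_of_quadratic hα.1.ne' hz (quadratic_of_mul_cauchyT_semicircle_eq hz h)
    · exact ⟨upperRoot α c, (upperRoot_im_pos hα hc).ne', upperRoot_mul_cauchyT_semicircle hα hc⟩
  · rw [mem_Ioo_iff_sq_lt] at hc
    refine ⟨upperRoot_im_pos hα hc, setOf_mul_cauchyT_semicircle_eq hα hc, ?_, ?_⟩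
    · change -((1 - α) / π) * (upperRoot α c)⁻¹.im = _
      rw [im_inv_upperRoot hα hc.le]
      field_simp [(sub_pos.mpr hα.2).ne']
    · rw [sqrt_mul_rhoSC_div_sqrt hα.1]
      ring
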